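/- arXiv:0907.5522 — 6 statements merged into one kernel-verified Lean document; each statement's English description precedes it below -/
import Mathlib

section
/- The function H(φ, y) = φ²(y² - φ²/4 + cφ/3 + g/2) is a first integral of the polynomial planar system dφ/dζ = 2φy, dy/dζ = φ² - cφ - g - 2y²: the gradient of H is orthogonal to the vector field at every point of ℝ², i.e., 2φy·∂H/∂φ + (φ² - cφ - g - 2y²)·∂H/∂y ≡ 0. -/
theorem hasDerivAt_firstIntegral_fst (c g q p : ℝ) :
    HasDerivAt (fun x : ℝ => x ^ 2 * (q ^ 2 - x ^ 2 / 4 + c * x / 3 + g / 2))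
      (p * (2 * q ^ 2 - p ^ 2 + c * p + g)) p := by
  have hx : HasDerivAt (fun x : ℝ => q ^ 2 - x ^ 2 / 4 + c * x / 3 + g / 2)
      (-(2 * p / 4) + c / 3) p := by
    simpa using ((((hasDerivAt_pow 2 p).div_const 4).const_sub (q ^ 2)).add
      (((hasDerivAt_id p).const_mul c).div_const 3)).add_const (g / 2)
  exact ((hasDerivAt_pow 2 p).mul hx).congr_deriv (by push_cast; ring)

theorem hasDerivAt_firstIntegral_snd (c g p q : ℝ) :
    HasDerivAt (fun y : ℝ => p ^ 2 * (y ^ 2 - p ^ 2 / 4 + c * p / 3 + g / 2))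
      (2 * p ^ 2 * q) q :=
  ((((hasDerivAt_pow 2 q).sub_const (p ^ 2 / 4)).add_const (c * p / 3)).add_const (g / 2)
    |>.const_mul (p ^ 2)).congr_deriv (by push_cast; ring)

/-- H(φ,y) = φ²(y² - φ²/4 + cφ/3 + g/2) is a first integral of the polynomial
system dφ/dζ = 2φy, dy/dζ = φ² - cφ - g - 2y²: the gradient of H is orthogonal
to the vector field at every point. -/
theorem stmt_3 (c g : ℝ) (H : ℝ → ℝ → ℝ)
    (hH : ∀ p q : ℝ, H p q = p ^ 2 * (q ^ 2 - p ^ 2 / 4 + c * p / 3 + g / 2)) :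
    ∀ p q : ℝ,
      2 * p * q * deriv (fun x => H x q) p
        + (p ^ 2 - c * p - g - 2 * q ^ 2) * deriv (fun x => H p x) q = 0 := by
  intro p q
  simp only [hH]
  -- the two terms are `±2p²q(2q² - p² + cp + g)`
  rw [(hasDerivAt_firstIntegral_fst c g q p).deriv, (hasDerivAt_firstIntegral_snd c g p q).deriv]
  ring
end

section
/- Suppose c > 0 and -c²/4 < g < -2c²/9. Then at the equilibrium (φ₀⁻, 0) the Jacobian determinant -4φ₀⁻(φ₀⁻ - c/2) is strictly positive with zero trace (center), while at (φ₀⁺, 0) the Jacobian determinant -4φ₀⁺(φ₀⁺ - c/2) is strictly negative (saddle). -/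
/-! With `s = √(c² + 4g)` we have `φ₀^± - c/2 = ±s/2`, so the two determinants are `(c - s) s` and
`-(c + s) s`; the hypotheses on `g` give `0 < s < c`. -/

open Real

noncomputable def equilibriumJacobianDet (c φ : ℝ) : ℝ := -4 * φ * (φ - c / 2)

lemma equilibriumJacobianDet_sub_pos {c s : ℝ} (hs : 0 < s) (hsc : s < c) :
    0 < equilibriumJacobianDet c ((c - s) / 2) := by
  have h : equilibriumJacobianDet c ((c - s) / 2) = (c - s) * s := by
    unfold equilibriumJacobianDet; ring
  exact h ▸ mul_pos (sub_pos.2 hsc) hs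

lemma equilibriumJacobianDet_add_neg {c s : ℝ} (hc : 0 ≤ c) (hs : 0 < s) :
    equilibriumJacobianDet c ((c + s) / 2) < 0 := by
  have h : equilibriumJacobianDet c ((c + s) / 2) = -((c + s) * s) := by
    unfold equilibriumJacobianDet; ring
  exact h ▸ neg_neg_of_pos (mul_pos (by linarith) hs)

lemma sqrt_sq_add_four_mul_pos {c g : ℝ} (hg : -c ^ 2 / 4 < g) : 0 < √(c ^ 2 + 4 * g) :=
  sqrt_pos.2 (by linarith)

lemma sqrt_sq_add_four_mul_lt {c g : ℝ} (hc : 0 < c) (hg : g < 0) : √(c ^ 2 + 4 * g) < c :=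
  (sqrt_lt' hc).2 (by linarith)

/-- For c > 0 and -c²/4 < g < -2c²/9: at (φ₀⁻, 0) the Jacobian determinant is
positive with zero trace (center), at (φ₀⁺, 0) it is negative (saddle). -/
theorem stmt_10 (c g : ℝ) (hc : 0 < c)
    (hg1 : -c ^ 2 / 4 < g) (hg2 : g < -2 * c ^ 2 / 9) :
    (0 < -4 * ((c - Real.sqrt (c ^ 2 + 4 * g)) / 2)
        * ((c - Real.sqrt (c ^ 2 + 4 * g)) / 2 - c / 2)) ∧
    (-3 * (0 : ℝ) = 0) ∧
    (-4 * ((c + Real.sqrt (c ^ 2 + 4 * g)) / 2)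
        * ((c + Real.sqrt (c ^ 2 + 4 * g)) / 2 - c / 2) < 0) := by
  have hs := sqrt_sq_add_four_mul_pos hg1
  have hsc := sqrt_sq_add_four_mul_lt hc (by nlinarith : g < 0)
  exact ⟨equilibriumJacobianDet_sub_pos hs hsc, mul_zero _, equilibriumJacobianDet_add_neg hc.le hs⟩
end

section
/- Let c < 0 and -c²/4 < g < -2c²/9. On the level set H(φ, y) = H(φ₀⁻, 0) of the first integral H(φ, y) = φ²(y² - φ²/4 + cφ/3 + g/2), one has for φ ≠ 0: y² = (φ - φ₀⁻)²(φ² + l₁φ + l₂)/(4φ²), where φ₀⁻ = (c - √(c²+4g))/2, l₁ = -(c + 3√(c²+4g))/3, l₂ = (c² + 6g - c√(c²+4g))/6. -/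
/-!
Writing `H φ y = φ² y² + V φ` (`V = potential c g`), the quartic `V φ - V φ₀⁻` has a double root at `φ₀⁻`, because
`V' φ = -φ (φ² - c φ - g)` vanishes at `φ₀⁻ = (c - √(c² + 4g))/2`. Dividing out `(φ - φ₀⁻)²`
leaves the quadratic `-(φ² + l₁ φ + l₂)/4`, and on the level set `φ² y² = V φ₀⁻ - V φ`.
-/

noncomputable def potential (c g φ : ℝ) : ℝ := φ ^ 2 * (-φ ^ 2 / 4 + c * φ / 3 + g / 2)

lemma potential_sub_potential_critical {c g s : ℝ} (hs : s ^ 2 = c ^ 2 + 4 * g) (φ : ℝ) :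
    potential c g φ - potential c g ((c - s) / 2) =
      -(φ - (c - s) / 2) ^ 2 * (φ ^ 2 - (c + 3 * s) / 3 * φ + (c ^ 2 + 6 * g - c * s) / 6) / 4 := by
  unfold potential
  linear_combination ((s ^ 2 - 4 * s * φ - 2 * c * s - 12 * φ ^ 2 + 4 * c * φ + c ^ 2) / 64) * hs

theorem stmt_12_general (c g : ℝ)
    (hg1 : -c ^ 2 / 4 < g)
    (H : ℝ → ℝ → ℝ)
    (hH : ∀ p q : ℝ, H p q = p ^ 2 * (q ^ 2 - p ^ 2 / 4 + c * p / 3 + g / 2))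
    (φ₀ l₁ l₂ : ℝ)
    (hφ₀ : φ₀ = (c - Real.sqrt (c ^ 2 + 4 * g)) / 2)
    (hl₁ : l₁ = -(c + 3 * Real.sqrt (c ^ 2 + 4 * g)) / 3)
    (hl₂ : l₂ = (c ^ 2 + 6 * g - c * Real.sqrt (c ^ 2 + 4 * g)) / 6) :
    ∀ φ y : ℝ, φ ≠ 0 → H φ y = H φ₀ 0 →
      y ^ 2 = (φ - φ₀) ^ 2 * (φ ^ 2 + l₁ * φ + l₂) / (4 * φ ^ 2) := by
  intro φ y hφ hlevel
  have hs : Real.sqrt (c ^ 2 + 4 * g) ^ 2 = c ^ 2 + 4 * g := Real.sq_sqrt (by linarith)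
  have hdrop := potential_sub_potential_critical hs φ
  unfold potential at hdrop
  rw [hH, hH] at hlevel
  subst hφ₀ hl₁ hl₂
  rw [eq_div_iff (by positivity)]
  linear_combination 4 * hlevel - 4 * hdrop

/-- On the level set H(φ,y) = H(φ₀⁻, 0), for φ ≠ 0 we have
y² = (φ - φ₀⁻)²(φ² + l₁φ + l₂)/(4φ²). -/
theorem stmt_12 (c g : ℝ) (hc : c < 0)
    (hg1 : -c ^ 2 / 4 < g) (hg2 : g < -2 * c ^ 2 / 9)
    (H : ℝ → ℝ → ℝ)
    (hH : ∀ p q : ℝ, H p q = p ^ 2 * (q ^ 2 - p ^ 2 / 4 + c * p / 3 + g / 2))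
    (φ₀ l₁ l₂ : ℝ)
    (hφ₀ : φ₀ = (c - Real.sqrt (c ^ 2 + 4 * g)) / 2)
    (hl₁ : l₁ = -(c + 3 * Real.sqrt (c ^ 2 + 4 * g)) / 3)
    (hl₂ : l₂ = (c ^ 2 + 6 * g - c * Real.sqrt (c ^ 2 + 4 * g)) / 6) :
    ∀ φ y : ℝ, φ ≠ 0 → H φ y = H φ₀ 0 →
      y ^ 2 = (φ - φ₀) ^ 2 * (φ ^ 2 + l₁ * φ + l₂) / (4 * φ ^ 2) :=
  stmt_12_general c g hg1 H hH φ₀ l₁ l₂ hφ₀ hl₁ hl₂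
end

section
/- Let c < 0 and -c²/4 < g < -2c²/9, φ₀⁻ = (c - √(c²+4g))/2, φ₁⁻ = (c + 3√(c²+4g) - 2√(c² + 3c√(c²+4g)))/6, l₁ = -(c + 3√(c²+4g))/3, l₂ = (c² + 6g - c√(c²+4g))/6. Then φ₁⁻ is a root of φ² + l₁φ + l₂ = 0, and the quadratic φ² + l₁φ + l₂ is nonnegative on the interval [φ₀⁻, φ₁⁻]. -/
/-!
Write `s = √(c² + 4g)` and `t = √(c² + 3cs)`. Using `s² = c² + 4g` and `t² = c² + 3cs`, the
quadratic factors as `(r₋ - φ)(r₊ - φ)` with `r± = (c + 3s ± 2t)/6`, so `φ₁⁻ = r₋` is its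
smaller root and both factors are nonnegative for `φ ≤ φ₁⁻`. The bound `g < -2c²/9` is what
gives `s ≤ -c/3`, i.e. `c² + 3cs = c(c + 3s) ≥ 0`, so that `t` is a genuine square root.
-/

lemma sq_add_three_mul_mul_sqrt_nonneg {c g : ℝ} (hc : c ≤ 0) (hg : g ≤ -2 * c ^ 2 / 9) :
    0 ≤ c ^ 2 + 3 * c * √(c ^ 2 + 4 * g) := by
  have hs : √(c ^ 2 + 4 * g) ≤ -c / 3 := by
    rw [Real.sqrt_le_left (by linarith)]
    linarith
  nlinarith

lemma quadratic_eq_mul_of_sq_eq {c g s t : ℝ} (hs : s ^ 2 = c ^ 2 + 4 * g)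
    (ht : t ^ 2 = c ^ 2 + 3 * c * s) (φ : ℝ) :
    φ ^ 2 + (-(c + 3 * s) / 3) * φ + (c ^ 2 + 6 * g - c * s) / 6
      = ((c + 3 * s - 2 * t) / 6 - φ) * ((c + 3 * s + 2 * t) / 6 - φ) := by
  linear_combination (-1 / 4 : ℝ) * hs + (1 / 9 : ℝ) * ht

theorem stmt_13_general (c g : ℝ) (hc : c < 0)
    (hg1 : -c ^ 2 / 4 < g) (hg2 : g < -2 * c ^ 2 / 9)
    (φ₀ φ₁ l₁ l₂ : ℝ)
    (hφ₁ : φ₁ = (c + 3 * Real.sqrt (c ^ 2 + 4 * g)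
      - 2 * Real.sqrt (c ^ 2 + 3 * c * Real.sqrt (c ^ 2 + 4 * g))) / 6)
    (hl₁ : l₁ = -(c + 3 * Real.sqrt (c ^ 2 + 4 * g)) / 3)
    (hl₂ : l₂ = (c ^ 2 + 6 * g - c * Real.sqrt (c ^ 2 + 4 * g)) / 6) :
    φ₁ ^ 2 + l₁ * φ₁ + l₂ = 0 ∧
    ∀ φ ∈ Set.Icc φ₀ φ₁, 0 ≤ φ ^ 2 + l₁ * φ + l₂ := by
  have hs : √(c ^ 2 + 4 * g) ^ 2 = c ^ 2 + 4 * g := Real.sq_sqrt (by linarith)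
  have ht := Real.sq_sqrt (sq_add_three_mul_mul_sqrt_nonneg hc.le hg2.le)
  set s := √(c ^ 2 + 4 * g)
  set t := √(c ^ 2 + 3 * c * s)
  have hfactor (φ : ℝ) : φ ^ 2 + l₁ * φ + l₂ = (φ₁ - φ) * ((c + 3 * s + 2 * t) / 6 - φ) := by
    rw [hφ₁, hl₁, hl₂]
    exact quadratic_eq_mul_of_sq_eq hs ht φ
  refine ⟨by rw [hfactor, sub_self, zero_mul], fun φ hφ => ?_⟩
  have ht_nonneg : 0 ≤ t := Real.sqrt_nonneg _
  rw [hfactor]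
  exact mul_nonneg (sub_nonneg.2 hφ.2) (by linarith [hφ.2])

/-- φ₁⁻ is a root of φ² + l₁φ + l₂ = 0 and the quadratic is nonnegative on
[φ₀⁻, φ₁⁻]. -/
theorem stmt_13 (c g : ℝ) (hc : c < 0)
    (hg1 : -c ^ 2 / 4 < g) (hg2 : g < -2 * c ^ 2 / 9)
    (φ₀ φ₁ l₁ l₂ : ℝ)
    (hφ₀ : φ₀ = (c - Real.sqrt (c ^ 2 + 4 * g)) / 2)
    (hφ₁ : φ₁ = (c + 3 * Real.sqrt (c ^ 2 + 4 * g)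
      - 2 * Real.sqrt (c ^ 2 + 3 * c * Real.sqrt (c ^ 2 + 4 * g))) / 6)
    (hl₁ : l₁ = -(c + 3 * Real.sqrt (c ^ 2 + 4 * g)) / 3)
    (hl₂ : l₂ = (c ^ 2 + 6 * g - c * Real.sqrt (c ^ 2 + 4 * g)) / 6) :
    φ₁ ^ 2 + l₁ * φ₁ + l₂ = 0 ∧
    ∀ φ ∈ Set.Icc φ₀ φ₁, 0 ≤ φ ^ 2 + l₁ * φ + l₂ :=
  stmt_13_general c g hc hg1 hg2 φ₀ φ₁ l₁ l₂ hφ₁ hl₁ hl₂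
end

section
/- Let c > 0 and -c²/4 < g < -2c²/9, and set φ₀⁺ = (c + √(c²+4g))/2, m₁ = -(c - 3√(c²+4g))/3, m₂ = (c² + 6g + c√(c²+4g))/6, h₀ = H(φ₀⁺, 0) where H(φ, y) = φ²(y² - φ²/4 + cφ/3 + g/2). Then the polynomial identity φ⁴ - (4c/3)φ³ - 2gφ² + 4h₀ = (φ - φ₀⁺)²(φ² + m₁φ + m₂) holds for all real φ. -/
/-- The difference of the two sides is a polynomial multiple of `s ^ 2 - (c ^ 2 + 4 * g)`. -/
theorem quartic_eq_sq_mul_quadratic_of_sq_eq {c g s : ℝ} (hs : s ^ 2 = c ^ 2 + 4 * g) (φ : ℝ) :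
    φ ^ 4 - (4 * c / 3) * φ ^ 3 - 2 * g * φ ^ 2
        + 4 * (((c + s) / 2) ^ 2 * (0 ^ 2 - ((c + s) / 2) ^ 2 / 4 + c * ((c + s) / 2) / 3 + g / 2))
      = (φ - (c + s) / 2) ^ 2 * (φ ^ 2 + -(c - 3 * s) / 3 * φ + (c ^ 2 + 6 * g + c * s) / 6) := by
  linear_combination (-(c * s) / 8 - s ^ 2 / 16 + 3 / 4 * φ ^ 2 - c * φ / 4 - s * φ / 4
    - c ^ 2 / 16) * hs

theorem stmt_16_general (c g : ℝ)
    (hg1 : -c ^ 2 / 4 < g)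
    (φ₀ m₁ m₂ h₀ : ℝ)
    (hφ₀ : φ₀ = (c + Real.sqrt (c ^ 2 + 4 * g)) / 2)
    (hm₁ : m₁ = -(c - 3 * Real.sqrt (c ^ 2 + 4 * g)) / 3)
    (hm₂ : m₂ = (c ^ 2 + 6 * g + c * Real.sqrt (c ^ 2 + 4 * g)) / 6)
    (hh₀ : h₀ = φ₀ ^ 2 * ((0:ℝ) ^ 2 - φ₀ ^ 2 / 4 + c * φ₀ / 3 + g / 2)) :
    ∀ φ : ℝ,
      φ ^ 4 - (4 * c / 3) * φ ^ 3 - 2 * g * φ ^ 2 + 4 * h₀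
        = (φ - φ₀) ^ 2 * (φ ^ 2 + m₁ * φ + m₂) := by
  have hs : Real.sqrt (c ^ 2 + 4 * g) ^ 2 = c ^ 2 + 4 * g := Real.sq_sqrt (by linarith)
  subst hh₀ hφ₀ hm₁ hm₂
  exact quartic_eq_sq_mul_quadratic_of_sq_eq hs

/-- Polynomial identity behind the homoclinic orbit for c > 0:
φ⁴ - (4c/3)φ³ - 2gφ² + 4h₀ = (φ - φ₀⁺)²(φ² + m₁φ + m₂). -/
theorem stmt_16 (c g : ℝ) (hc : 0 < c)
    (hg1 : -c ^ 2 / 4 < g) (hg2 : g < -2 * c ^ 2 / 9)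
    (φ₀ m₁ m₂ h₀ : ℝ)
    (hφ₀ : φ₀ = (c + Real.sqrt (c ^ 2 + 4 * g)) / 2)
    (hm₁ : m₁ = -(c - 3 * Real.sqrt (c ^ 2 + 4 * g)) / 3)
    (hm₂ : m₂ = (c ^ 2 + 6 * g + c * Real.sqrt (c ^ 2 + 4 * g)) / 6)
    (hh₀ : h₀ = φ₀ ^ 2 * ((0:ℝ) ^ 2 - φ₀ ^ 2 / 4 + c * φ₀ / 3 + g / 2)) :
    ∀ φ : ℝ,
      φ ^ 4 - (4 * c / 3) * φ ^ 3 - 2 * g * φ ^ 2 + 4 * h₀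
        = (φ - φ₀) ^ 2 * (φ ^ 2 + m₁ * φ + m₂) :=
  stmt_16_general c g hg1 φ₀ m₁ m₂ h₀ hφ₀ hm₁ hm₂ hh₀
end

section
/- Let c < 0, -c²/4 < g < -2c²/9, and let φ : I → ℝ be a C¹ function on an open interval I with φ₀⁻ < φ(ξ) < φ₁⁻ and φ(ξ) < 0 for all ξ ∈ I, satisfying the ODE φ' = -(φ - φ₀⁻)√(φ² + l₁φ + l₂)/(2φ). Then u(x,t) = φ(x - ct) satisfies the traveling-wave equation -cφ' + 2φφ' - 6φ'φ'' - 2φφ''' = 0 wherever φ is C³. -/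
/-!
The traveling-wave equation `-cφ' + 2φφ' - 6φ'φ'' - 2φφ''' = 0` says exactly that the energy
`E = -cφ + φ² - 2φ'² - 2φφ''` is locally constant. Squaring the orbit ODE gives the first integral
`4φ²φ'² = (φ - φ₀⁻)²(φ² + l₁φ + l₂)`, and for the given parameters the right-hand side is a quartic
`φ⁴ - (4c/3)φ³ + Aφ² + B` without linear term. Differentiating the first integral and dividing
by `4φφ'`, which does not vanish since `φ < 0` and `φ₀⁻ < φ < φ₁⁻` keep `φ'` positive, gives
`E = -A/2`.
-/

open Filter Topology

noncomputable def waveEnergy (c : ℝ) (φ : ℝ → ℝ) (ξ : ℝ) : ℝ :=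
  -c * φ ξ + φ ξ ^ 2 - 2 * deriv φ ξ ^ 2 - 2 * φ ξ * iteratedDeriv 2 φ ξ

section TravelingWave

variable {c : ℝ} {φ : ℝ → ℝ} {ξ : ℝ}

theorem hasDerivAt_waveEnergy (hφ : ContDiffAt ℝ 3 φ ξ) :
    HasDerivAt (waveEnergy c φ)
      (-c * deriv φ ξ + 2 * φ ξ * deriv φ ξ - 6 * deriv φ ξ * iteratedDeriv 2 φ ξ
        - 2 * φ ξ * iteratedDeriv 3 φ ξ) ξ := by
  have h₂ : ContDiffAt ℝ 2 (deriv φ) ξ := hφ.derivWithin (by norm_num)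
  have h₁ : ContDiffAt ℝ 1 (deriv (deriv φ)) ξ := h₂.derivWithin (by norm_num)
  have d₀ := (hφ.differentiableAt (by norm_num)).hasDerivAt
  have d₁ := (h₂.differentiableAt (by norm_num)).hasDerivAt
  have d₂ := (h₁.differentiableAt (by norm_num)).hasDerivAt
  have hE : waveEnergy c φ = fun y ↦
      -c * φ y + φ y ^ 2 - 2 * deriv φ y ^ 2 - 2 * φ y * deriv (deriv φ) y := by
    funext y
    simp [waveEnergy, iteratedDeriv_eq_iterate]
  rw [hE, iteratedDeriv_eq_iterate, iteratedDeriv_eq_iterate]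
  refine ((((d₀.const_mul (-c)).add (d₀.fun_pow 2)).sub ((d₁.fun_pow 2).const_mul 2)).sub
    ((d₀.const_mul 2).mul d₂)).congr_deriv ?_
  simp only [Function.iterate_succ, Function.iterate_zero, Function.comp_apply, id_eq]
  push_cast
  ring

variable {A B : ℝ}

theorem waveEnergy_eq_of_firstIntegral
    (hint : ∀ᶠ w in 𝓝 ξ,
      4 * φ w ^ 2 * deriv φ w ^ 2 = φ w ^ 4 - 4 * c / 3 * φ w ^ 3 + A * φ w ^ 2 + B)
    (hφ : DifferentiableAt ℝ φ ξ) (hφ' : DifferentiableAt ℝ (deriv φ) ξ)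
    (h₀ : φ ξ ≠ 0) (h₁ : deriv φ ξ ≠ 0) :
    waveEnergy c φ ξ = -A / 2 := by
  have d₀ := hφ.hasDerivAt
  have d₁ := hφ'.hasDerivAt
  have hlhs : HasDerivAt (fun w ↦ 4 * φ w ^ 2 * deriv φ w ^ 2)
      (8 * φ ξ * deriv φ ξ * (deriv φ ξ ^ 2 + φ ξ * deriv (deriv φ) ξ)) ξ := by
    refine (((d₀.fun_pow 2).const_mul 4).mul (d₁.fun_pow 2)).congr_deriv ?_
    push_cast
    ring
  have hrhs : HasDerivAt (fun w ↦ φ w ^ 4 - 4 * c / 3 * φ w ^ 3 + A * φ w ^ 2 + B)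
      ((4 * φ ξ ^ 3 - 4 * c * φ ξ ^ 2 + 2 * A * φ ξ) * deriv φ ξ) ξ := by
    refine ((((d₀.fun_pow 4).sub ((d₀.fun_pow 3).const_mul (4 * c / 3))).add
      ((d₀.fun_pow 2).const_mul A)).add_const B).congr_deriv ?_
    push_cast
    ring
  have hderiv := hlhs.unique (hrhs.congr_of_eventuallyEq hint)
  have hφφ' : 4 * φ ξ * deriv φ ξ ≠ 0 := by positivity
  have hsecond : 2 * deriv φ ξ ^ 2 + 2 * φ ξ * deriv (deriv φ) ξ = φ ξ ^ 2 - c * φ ξ + A / 2 :=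
    mul_left_cancel₀ hφφ' (by linear_combination hderiv)
  simp only [waveEnergy, iteratedDeriv_eq_iterate, Function.iterate_succ, Function.iterate_zero,
    Function.comp_apply, id_eq]
  linear_combination -hsecond

theorem travelingWave_of_firstIntegral
    (hint : ∀ᶠ w in 𝓝 ξ,
      4 * φ w ^ 2 * deriv φ w ^ 2 = φ w ^ 4 - 4 * c / 3 * φ w ^ 3 + A * φ w ^ 2 + B)
    (hne : ∀ᶠ w in 𝓝 ξ, φ w ≠ 0 ∧ deriv φ w ≠ 0) (hφ : ContDiffAt ℝ 3 φ ξ) :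
    -c * deriv φ ξ + 2 * φ ξ * deriv φ ξ - 6 * deriv φ ξ * iteratedDeriv 2 φ ξ
      - 2 * φ ξ * iteratedDeriv 3 φ ξ = 0 := by
  have hconst : waveEnergy c φ =ᶠ[𝓝 ξ] fun _ ↦ -A / 2 := by
    filter_upwards [hint.eventually_nhds, hne, hφ.eventually (by simp)] with w hw hw₀ hC
    exact waveEnergy_eq_of_firstIntegral hw (hC.differentiableAt (by norm_num))
      ((hC.derivWithin (m := 2) (by norm_num)).differentiableAt (by norm_num)) hw₀.1 hw₀.2
  exact (hasDerivAt_waveEnergy hφ).unique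
    ((hasDerivAt_const ξ (-A / 2)).congr_of_eventuallyEq hconst)

end TravelingWave

theorem orbitQuadratic_pos {c g s x : ℝ} (hs : s ^ 2 = c ^ 2 + 4 * g)
    (hcs : 0 ≤ c ^ 2 + 3 * c * s)
    (hx : x < (c + 3 * s - 2 * Real.sqrt (c ^ 2 + 3 * c * s)) / 6) :
    0 < x ^ 2 + -(c + 3 * s) / 3 * x + (c ^ 2 + 6 * g - c * s) / 6 := by
  set t := Real.sqrt (c ^ 2 + 3 * c * s)
  have ht : t ^ 2 = c ^ 2 + 3 * c * s := Real.sq_sqrt hcs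
  have ht₀ : 0 ≤ t := Real.sqrt_nonneg _
  have hroots : x ^ 2 + -(c + 3 * s) / 3 * x + (c ^ 2 + 6 * g - c * s) / 6
      = ((c + 3 * s - 2 * t) / 6 - x) * ((c + 3 * s + 2 * t) / 6 - x) := by
    linear_combination (-1 / 4 : ℝ) * hs + (1 / 9 : ℝ) * ht
  rw [hroots]
  exact mul_pos (by linarith) (by linarith)

theorem stmt_17_general (c g : ℝ) (hc : c < 0)
    (hg1 : -c ^ 2 / 4 < g) (hg2 : g < -2 * c ^ 2 / 9)
    (φ₀ φ₁ l₁ l₂ : ℝ)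
    (hφ₀ : φ₀ = (c - Real.sqrt (c ^ 2 + 4 * g)) / 2)
    (hφ₁ : φ₁ = (c + 3 * Real.sqrt (c ^ 2 + 4 * g)
      - 2 * Real.sqrt (c ^ 2 + 3 * c * Real.sqrt (c ^ 2 + 4 * g))) / 6)
    (hl₁ : l₁ = -(c + 3 * Real.sqrt (c ^ 2 + 4 * g)) / 3)
    (hl₂ : l₂ = (c ^ 2 + 6 * g - c * Real.sqrt (c ^ 2 + 4 * g)) / 6)
    (I : Set ℝ) (hI : IsOpen I)
    (φ : ℝ → ℝ)
    (hrange : ∀ ξ ∈ I, φ₀ < φ ξ ∧ φ ξ < φ₁ ∧ φ ξ < 0)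
    (hODE : ∀ ξ ∈ I, HasDerivAt φ
      (-(φ ξ - φ₀) * Real.sqrt ((φ ξ) ^ 2 + l₁ * φ ξ + l₂) / (2 * φ ξ)) ξ) :
    ∀ ξ ∈ I, ContDiffAt ℝ 3 φ ξ →
      -c * deriv φ ξ + 2 * φ ξ * deriv φ ξ
        - 6 * deriv φ ξ * iteratedDeriv 2 φ ξ
        - 2 * φ ξ * iteratedDeriv 3 φ ξ = 0 := by
  intro ξ hξ hφ
  set s := Real.sqrt (c ^ 2 + 4 * g)
  have hs : s ^ 2 = c ^ 2 + 4 * g := Real.sq_sqrt (by linarith)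
  have hs_le : 3 * s ≤ -c := by nlinarith [hc, Real.sqrt_nonneg (c ^ 2 + 4 * g)]
  have hcs : 0 ≤ c ^ 2 + 3 * c * s := by nlinarith
  have hQ : ∀ ζ ∈ I, 0 < φ ζ ^ 2 + l₁ * φ ζ + l₂ := fun ζ hζ ↦ by
    subst hl₁ hl₂ hφ₁
    exact orbitQuadratic_pos hs hcs (hrange ζ hζ).2.1
  have hquartic : ∀ x : ℝ, (x - φ₀) ^ 2 * (x ^ 2 + l₁ * x + l₂)
      = x ^ 4 - 4 * c / 3 * x ^ 3 + (l₂ - 2 * φ₀ * l₁ + φ₀ ^ 2) * x ^ 2 + φ₀ ^ 2 * l₂ := by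
    intro x
    subst hφ₀ hl₁ hl₂
    linear_combination (x * (c - s) / 4) * hs
  have hint : ∀ ζ ∈ I, 4 * φ ζ ^ 2 * deriv φ ζ ^ 2
      = φ ζ ^ 4 - 4 * c / 3 * φ ζ ^ 3 + (l₂ - 2 * φ₀ * l₁ + φ₀ ^ 2) * φ ζ ^ 2 + φ₀ ^ 2 * l₂ := by
    intro ζ hζ
    have hφζ : φ ζ ≠ 0 := (hrange ζ hζ).2.2.ne
    rw [← hquartic, (hODE ζ hζ).deriv, div_pow, mul_pow, neg_sq, Real.sq_sqrt (hQ ζ hζ).le]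
    field_simp
    ring
  have hne : ∀ ζ ∈ I, φ ζ ≠ 0 ∧ deriv φ ζ ≠ 0 := fun ζ hζ ↦ by
    obtain ⟨hgt, -, hneg⟩ := hrange ζ hζ
    refine ⟨hneg.ne, ?_⟩
    rw [(hODE ζ hζ).deriv]
    have := Real.sqrt_pos.2 (hQ ζ hζ)
    exact (div_pos_of_neg_of_neg (by nlinarith) (by linarith)).ne'
  exact travelingWave_of_firstIntegral (eventually_of_mem (hI.mem_nhds hξ) hint)
    (eventually_of_mem (hI.mem_nhds hξ) hne) hφ

/-- A solution of the orbit ODE φ' = -(φ - φ₀⁻)√(φ² + l₁φ + l₂)/(2φ) on an open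
interval, staying in (φ₀⁻, φ₁⁻) with φ < 0, satisfies the traveling-wave
equation -cφ' + 2φφ' - 6φ'φ'' - 2φφ''' = 0 wherever it is C³. -/
theorem stmt_17 (c g : ℝ) (hc : c < 0)
    (hg1 : -c ^ 2 / 4 < g) (hg2 : g < -2 * c ^ 2 / 9)
    (φ₀ φ₁ l₁ l₂ : ℝ)
    (hφ₀ : φ₀ = (c - Real.sqrt (c ^ 2 + 4 * g)) / 2)
    (hφ₁ : φ₁ = (c + 3 * Real.sqrt (c ^ 2 + 4 * g)
      - 2 * Real.sqrt (c ^ 2 + 3 * c * Real.sqrt (c ^ 2 + 4 * g))) / 6)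
    (hl₁ : l₁ = -(c + 3 * Real.sqrt (c ^ 2 + 4 * g)) / 3)
    (hl₂ : l₂ = (c ^ 2 + 6 * g - c * Real.sqrt (c ^ 2 + 4 * g)) / 6)
    (I : Set ℝ) (hI : IsOpen I) (a b : ℝ) (hIab : I = Set.Ioo a b)
    (φ : ℝ → ℝ)
    (hrange : ∀ ξ ∈ I, φ₀ < φ ξ ∧ φ ξ < φ₁ ∧ φ ξ < 0)
    (hODE : ∀ ξ ∈ I, HasDerivAt φ
      (-(φ ξ - φ₀) * Real.sqrt ((φ ξ) ^ 2 + l₁ * φ ξ + l₂) / (2 * φ ξ)) ξ) :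
    ∀ ξ ∈ I, ContDiffAt ℝ 3 φ ξ →
      -c * deriv φ ξ + 2 * φ ξ * deriv φ ξ
        - 6 * deriv φ ξ * iteratedDeriv 2 φ ξ
        - 2 * φ ξ * iteratedDeriv 3 φ ξ = 0 :=
  stmt_17_general c g hc hg1 hg2 φ₀ φ₁ l₁ l₂ hφ₀ hφ₁ hl₁ hl₂ I hI φ hrange hODE
end
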